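/- (Matching bounds for smoothed monomials) Fix k ≥ 0 and suppose λ² ≤ d/C for a sufficiently large constant C depending on k. Define s_k(α;λ) = (1+λ²)^{−k/2} · [α^k if α² ≥ λ²/d; (λ²/d)^{k/2} if α² ≤ λ²/d and k even; α(λ²/d)^{(k−1)/2} if α² ≤ λ²/d and k odd]. Then there exist constants c(k), C(k) > 0 such that c(k)·s_k(α;λ) ≤ 𝓛_λ(α^k) ≤ C(k)·s_k(α;λ) for all α ∈ [0,1]. -/

import Mathlib

open MeasureTheory

set_option maxHeartbeats 1000000
open Set
open scoped NNReal ENNReal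

noncomputable def sphereMarginal (d : ℕ) : Measure ℝ :=
  (volume.restrict (Set.Ioo (-1 : ℝ) 1)).withDensity fun x =>
    ENNReal.ofReal ((1 - x ^ 2) ^ (((d : ℝ) - 3) / 2) *
      (Real.Gamma ((d : ℝ) / 2) / (Real.sqrt Real.pi * Real.Gamma (((d : ℝ) - 1) / 2))))

/-- The comparison function `s_k(α;λ)`. -/
noncomputable def sk (d k : ℕ) (lam α : ℝ) : ℝ :=
  (1 + lam ^ 2) ^ (-(k : ℝ) / 2) *
    (if lam ^ 2 / (d : ℝ) ≤ α ^ 2 then α ^ k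
     else if Even k then (lam ^ 2 / (d : ℝ)) ^ ((k : ℝ) / 2)
     else α * (lam ^ 2 / (d : ℝ)) ^ (((k : ℝ) - 1) / 2))

lemma betaComplex_eq {u v : ℝ} (hu : 0 < u) (hv : 0 < v) :
    Complex.betaIntegral u v = ((∫ t in (0:ℝ)..1, t ^ (u-1) * (1-t) ^ (v-1) : ℝ) : ℂ) := by
  rw [Complex.betaIntegral, ← intervalIntegral.integral_ofReal]
  refine intervalIntegral.integral_congr fun x hx => ?_
  rw [uIcc_of_le zero_le_one] at hx
  rw [show ((u:ℂ)-1) = ((u-1 : ℝ) : ℂ) by push_cast; ring,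
    show ((v:ℂ)-1) = ((v-1 : ℝ) : ℂ) by push_cast; ring,
    show ((1:ℂ) - (x:ℝ)) = ((1 - x : ℝ) : ℂ) by push_cast; ring,
    ← Complex.ofReal_cpow hx.1, ← Complex.ofReal_cpow (by linarith [hx.2]),
    ← Complex.ofReal_mul]

lemma betaReal {u v : ℝ} (hu : 0 < u) (hv : 0 < v) :
    ∫ t in Ioo (0:ℝ) 1, t ^ (u-1) * (1-t) ^ (v-1) =
      Real.Gamma u * Real.Gamma v / Real.Gamma (u+v) := by
  have h := Complex.Gamma_mul_Gamma_eq_betaIntegral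
    (s := u) (t := v) (by simpa using hu) (by simpa using hv)
  rw [betaComplex_eq hu hv] at h
  have hne : (Complex.Gamma ((u:ℂ)+(v:ℂ))) ≠ 0 := by
    rw [show ((u:ℂ)+(v:ℂ)) = ((u+v : ℝ) : ℂ) by push_cast; ring, Complex.Gamma_ofReal]
    exact_mod_cast (Real.Gamma_pos_of_pos (by linarith)).ne'
  have h2 : ((∫ t in (0:ℝ)..1, t ^ (u-1) * (1-t) ^ (v-1) : ℝ) : ℂ)
      = Complex.Gamma u * Complex.Gamma v / Complex.Gamma ((u:ℂ)+(v:ℂ)) := by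
    rw [h, mul_comm, mul_div_assoc, div_self hne, mul_one]
  rw [Complex.Gamma_ofReal, Complex.Gamma_ofReal,
    show ((u:ℂ)+(v:ℂ)) = ((u+v : ℝ) : ℂ) by push_cast; ring, Complex.Gamma_ofReal] at h2
  have h3 : (∫ t in (0:ℝ)..1, t ^ (u-1) * (1-t) ^ (v-1) : ℝ)
      = Real.Gamma u * Real.Gamma v / Real.Gamma (u+v) := by
    exact_mod_cast h2
  rw [← h3, intervalIntegral.integral_of_le zero_le_one, integral_Ioc_eq_integral_Ioo]

lemma betaIntegrable {u v : ℝ} (hu : 0 < u) (hv : 0 < v) :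
    IntegrableOn (fun t : ℝ => t ^ (u-1) * (1-t) ^ (v-1)) (Ioo 0 1) := by
  have h := (Complex.betaIntegral_convergent (u := u) (v := v) (by simpa using hu)
    (by simpa using hv))
  rw [intervalIntegrable_iff_integrableOn_Ioc_of_le zero_le_one] at h
  have h5 : IntegrableOn
      (fun x : ℝ => ((x:ℂ) ^ ((u:ℂ)-1) * ((1:ℂ)-(x:ℝ)) ^ ((v:ℂ)-1)).re) (Ioc 0 1) := h.re
  refine ((h5.congr_fun (fun x hx => ?_) measurableSet_Ioc)).mono_set Ioo_subset_Ioc_self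
  have h1 : (0:ℝ) ≤ x := hx.1.le
  have h2 : (0:ℝ) ≤ 1 - x := by linarith [hx.2]
  rw [show ((u:ℂ)-1) = ((u-1 : ℝ) : ℂ) by push_cast; ring,
    show ((v:ℂ)-1) = ((v-1 : ℝ) : ℂ) by push_cast; ring,
    show ((1:ℂ) - (x:ℝ)) = ((1 - x : ℝ) : ℂ) by push_cast; ring,
    ← Complex.ofReal_cpow h1, ← Complex.ofReal_cpow h2, ← Complex.ofReal_mul,
    Complex.ofReal_re]

section
variable {p : ℝ}

lemma sq_image : (fun x : ℝ => x ^ 2) '' (Ioo 0 1) = Ioo 0 1 := by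
  ext y
  simp only [mem_image, mem_Ioo]
  constructor
  · rintro ⟨x, hx, rfl⟩
    exact ⟨pow_pos hx.1 2, by nlinarith [hx.1, hx.2]⟩
  · intro hy
    refine ⟨Real.sqrt y, ⟨Real.sqrt_pos.2 hy.1, ?_⟩, Real.sq_sqrt hy.1.le⟩
    rw [show (1:ℝ) = Real.sqrt 1 by simp]
    exact Real.sqrt_lt_sqrt hy.1.le hy.2

lemma sq_deriv : ∀ x ∈ Ioo (0:ℝ) 1, HasDerivWithinAt (fun x : ℝ => x ^ 2) (2 * x) (Ioo 0 1) x := by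
  intro x _
  simpa [mul_comm] using (hasDerivAt_pow 2 x).hasDerivWithinAt

lemma sq_inj : InjOn (fun x : ℝ => x ^ 2) (Ioo 0 1) := by
  intro a ha b hb h
  simp only at h
  nlinarith [ha.1, hb.1]

lemma subst_eq (p : ℝ) (i : ℕ) (x : ℝ) (hx : x ∈ Ioo (0:ℝ) 1) :
    |2 * x| • ((x^2) ^ ((i:ℝ)+1/2-1) * (1-x^2) ^ ((p+1)-1)) = 2 * (x^(2*i) * (1-x^2)^p) := by
  have hx0 : 0 < x := hx.1
  have h1 : (x^2 : ℝ) ^ ((i:ℝ)+1/2-1) = x ^ (2*((i:ℝ)+1/2-1)) := by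
    rw [← Real.rpow_natCast x 2, ← Real.rpow_mul hx0.le]
    norm_num
  have h2 : x * x ^ (2*((i:ℝ)+1/2-1)) = x ^ (2*i : ℕ) := by
    rw [← Real.rpow_natCast x (2*i),
      show x * x ^ (2*((i:ℝ)+1/2-1)) = x^(1:ℝ) * x ^ (2*((i:ℝ)+1/2-1)) by rw [Real.rpow_one],
      ← Real.rpow_add hx0]
    push_cast
    ring_nf
  rw [abs_of_pos (by linarith), smul_eq_mul, show ((p:ℝ)+1)-1 = p by ring, h1, ← h2]
  ring

lemma momIoo01_int (hp : -1 < p) (i : ℕ) :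
    IntegrableOn (fun x : ℝ => x^(2*i) * (1-x^2)^p) (Ioo 0 1) := by
  have hu : (0:ℝ) < (i:ℝ)+1/2 := by positivity
  have hv : (0:ℝ) < p+1 := by linarith
  have h := (integrableOn_image_iff_integrableOn_abs_deriv_smul measurableSet_Ioo
    (sq_deriv) (sq_inj) (fun t : ℝ => t ^ ((i:ℝ)+1/2-1) * (1-t) ^ ((p+1)-1))).mp
    (by rw [sq_image]; exact betaIntegrable hu hv)
  have h2 : IntegrableOn (fun x : ℝ => 2 * (x^(2*i) * (1-x^2)^p)) (Ioo 0 1) :=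
    h.congr_fun (fun x hx => subst_eq p i x hx) measurableSet_Ioo
  refine IntegrableOn.congr_fun (h2.const_mul (1/2)) (fun x _ => ?_) measurableSet_Ioo
  show (1/2:ℝ) * (2 * (x^(2*i) * (1-x^2)^p)) = x^(2*i) * (1-x^2)^p
  ring

lemma momIoo01 (hp : -1 < p) (i : ℕ) :
    ∫ x in Ioo (0:ℝ) 1, x^(2*i) * (1-x^2)^p =
      (1/2) * (Real.Gamma ((i:ℝ)+1/2) * Real.Gamma (p+1) / Real.Gamma (((i:ℝ)+1/2)+(p+1))) := by
  have hu : (0:ℝ) < (i:ℝ)+1/2 := by positivity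
  have hv : (0:ℝ) < p+1 := by linarith
  have h := integral_image_eq_integral_abs_deriv_smul measurableSet_Ioo
    (sq_deriv) (sq_inj) (fun t : ℝ => t ^ ((i:ℝ)+1/2-1) * (1-t) ^ ((p+1)-1))
  rw [sq_image, betaReal hu hv] at h
  rw [setIntegral_congr_fun measurableSet_Ioo (fun x hx => subst_eq p i x hx)] at h
  rw [integral_const_mul] at h
  linarith [h]
end

lemma negEmb : MeasurableEmbedding (Neg.neg : ℝ → ℝ) :=
  (Homeomorph.neg ℝ).isClosedEmbedding.measurableEmbedding

lemma integral_neg_seg (f : ℝ → ℝ) :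
    ∫ x in Ioo (-1:ℝ) 0, f x = ∫ x in Ioo (0:ℝ) 1, f (-x) := by
  have h1 : ∫ x in Ioo (-1:ℝ) 0, f x ∂(Measure.map Neg.neg volume)
      = ∫ x in (Neg.neg ⁻¹' Ioo (-1:ℝ) 0), f (-x) ∂volume := negEmb.setIntegral_map f _
  rw [Measure.map_neg_eq_self] at h1
  rw [h1, neg_preimage, neg_Ioo]
  norm_num

lemma integrableOn_neg_seg {f : ℝ → ℝ} (h0 : IntegrableOn f (Ioo 0 1))
    (h : IntegrableOn (fun x => f (-x)) (Ioo 0 1)) :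
    IntegrableOn f (Ioo (-1:ℝ) 1) := by
  have h2 : IntegrableOn f (Ioo (-1:ℝ) 0) := by
    have h3 := (negEmb.integrableOn_map_iff (f := f) (s := Ioo (-1:ℝ) 0)
      (μ := (volume : Measure ℝ)))
    rw [Measure.map_neg_eq_self, neg_preimage, neg_Ioo, neg_neg, neg_zero] at h3
    exact h3.mpr h
  have h4 : IntegrableOn f (Ioc (-1:ℝ) 0) := h2.congr_set_ae Ioo_ae_eq_Ioc.symm
  have h5 : IntegrableOn f (Ioc (0:ℝ) 1) := h0.congr_set_ae Ioo_ae_eq_Ioc.symm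
  have h6 : IntegrableOn f (Ioc (-1:ℝ) 1) := by
    rw [← Ioc_union_Ioc_eq_Ioc (by norm_num : (-1:ℝ) ≤ 0) (by norm_num : (0:ℝ) ≤ 1)]
    exact h4.union h5
  exact h6.mono_set Ioo_subset_Ioc_self

lemma split_integral {f : ℝ → ℝ} (h : IntegrableOn f (Ioo (-1:ℝ) 1)) :
    ∫ x in Ioo (-1:ℝ) 1, f x =
      (∫ x in Ioo (0:ℝ) 1, f (-x)) + ∫ x in Ioo (0:ℝ) 1, f x := by
  have h6 : IntegrableOn f (Ioc (-1:ℝ) 1) := h.congr_set_ae Ioo_ae_eq_Ioc.symm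
  have h4 : IntegrableOn f (Ioc (-1:ℝ) 0) := h6.mono_set (Ioc_subset_Ioc le_rfl (by norm_num))
  have h5 : IntegrableOn f (Ioc (0:ℝ) 1) := h6.mono_set (Ioc_subset_Ioc (by norm_num) le_rfl)
  rw [← integral_Ioc_eq_integral_Ioo,
    ← Ioc_union_Ioc_eq_Ioc (by norm_num : (-1:ℝ) ≤ 0) (by norm_num : (0:ℝ) ≤ 1),
    setIntegral_union (Ioc_disjoint_Ioc_of_le le_rfl) measurableSet_Ioc h4 h5,
    integral_Ioc_eq_integral_Ioo, integral_Ioc_eq_integral_Ioo, integral_neg_seg]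

variable {p : ℝ}

lemma wInt (hp : -1 < p) : IntegrableOn (fun x : ℝ => (1-x^2)^p) (Ioo (-1:ℝ) 1) := by
  have h0 : IntegrableOn (fun x : ℝ => (1-x^2)^p) (Ioo 0 1) := by
    have := momIoo01_int hp 0
    simpa using this
  exact integrableOn_neg_seg h0 (by simpa using h0)

lemma momInt (hp : -1 < p) (m : ℕ) :
    IntegrableOn (fun x : ℝ => x^m * (1-x^2)^p) (Ioo (-1:ℝ) 1) := by
  refine (wInt hp).mono' ?_ ?_
  · refine ContinuousOn.aestronglyMeasurable ?_ measurableSet_Ioo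
    refine ((continuous_pow m).continuousOn).mul
      (((continuous_const.sub (continuous_pow 2)).continuousOn).rpow_const fun x hx => ?_)
    exact Or.inl (ne_of_gt (by simp only [Pi.sub_apply]; nlinarith [hx.1, hx.2]))
  · refine (ae_restrict_iff' measurableSet_Ioo).mpr (ae_of_all _ fun x hx => ?_)
    have hx1 : |x| ≤ 1 := by
      rw [abs_le]; exact ⟨hx.1.le, hx.2.le⟩
    rw [norm_mul]
    have : ‖x^m‖ ≤ 1 := by
      rw [norm_pow]
      exact pow_le_one₀ (norm_nonneg x) hx1
    calc ‖x^m‖ * ‖(1-x^2)^p‖ ≤ 1 * ‖(1-x^2)^p‖ :=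
          mul_le_mul_of_nonneg_right this (norm_nonneg _)
      _ = (1-x^2)^p := by
          rw [one_mul, Real.norm_eq_abs,
            abs_of_nonneg (Real.rpow_nonneg (by nlinarith [hx.1, hx.2]) p)]

lemma momEven (hp : -1 < p) (i : ℕ) :
    ∫ x in Ioo (-1:ℝ) 1, x^(2*i) * (1-x^2)^p =
      Real.Gamma ((i:ℝ)+1/2) * Real.Gamma (p+1) / Real.Gamma (((i:ℝ)+1/2)+(p+1)) := by
  rw [split_integral (momInt hp (2*i))]
  have he : ∀ x : ℝ, (-x)^(2*i) * (1-(-x)^2)^p = x^(2*i) * (1-x^2)^p := by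
    intro x
    rw [neg_sq, (Even.neg_pow ⟨i, by ring⟩ x)]
  simp_rw [he]
  rw [momIoo01 hp i]
  ring

lemma momOdd (hp : -1 < p) (i : ℕ) :
    ∫ x in Ioo (-1:ℝ) 1, x^(2*i+1) * (1-x^2)^p = 0 := by
  rw [split_integral (momInt hp (2*i+1))]
  have he : ∀ x : ℝ, (-x)^(2*i+1) * (1-(-x)^2)^p = -(x^(2*i+1) * (1-x^2)^p) := by
    intro x
    rw [neg_sq, (Odd.neg_pow ⟨i, by ring⟩ x)]
    ring
  simp_rw [he]
  rw [integral_neg]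
  ring

noncomputable def cD (D : ℕ) : ℝ :=
  Real.Gamma ((D : ℝ) / 2) / (Real.sqrt Real.pi * Real.Gamma (((D : ℝ) - 1) / 2))

lemma int_marginal (D : ℕ) (hD : 2 ≤ D) (g : ℝ → ℝ) :
    ∫ t, g t ∂ sphereMarginal D =
      ∫ x in Ioo (-1:ℝ) 1, ((1 - x^2) ^ (((D:ℝ)-3)/2) * cD D) * g x := by
  have hmeas : Measurable fun x : ℝ =>
      Real.toNNReal ((1 - x ^ 2) ^ (((D : ℝ) - 3) / 2) * cD D) := by
    measurability
  have h0 : sphereMarginal D = (volume.restrict (Set.Ioo (-1 : ℝ) 1)).withDensity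
      fun x => ((Real.toNNReal ((1 - x ^ 2) ^ (((D : ℝ) - 3) / 2) * cD D) : ℝ≥0) : ℝ≥0∞) := by
    rfl
  rw [h0, integral_withDensity_eq_integral_smul hmeas]
  refine setIntegral_congr_fun measurableSet_Ioo fun x hx => ?_
  have hpos : (0:ℝ) < 1 - x^2 := by nlinarith [hx.1, hx.2]
  have hcD : 0 ≤ cD D := by
    have h1 : 0 < Real.Gamma ((D:ℝ)/2) := Real.Gamma_pos_of_pos (by positivity)
    have h2 : 0 < Real.Gamma (((D:ℝ)-1)/2) := by
      refine Real.Gamma_pos_of_pos ?_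
      have : (2:ℝ) ≤ (D:ℝ) := by exact_mod_cast hD
      linarith
    have h3 : 0 < Real.sqrt Real.pi := Real.sqrt_pos.2 Real.pi_pos
    exact div_nonneg h1.le (mul_nonneg h3.le h2.le)
  have hW : 0 ≤ (1 - x^2) ^ (((D:ℝ)-3)/2) * cD D :=
    mul_nonneg (Real.rpow_nonneg hpos.le _) hcD
  rw [NNReal.smul_def, Real.coe_toNNReal _ hW]
  rfl

noncomputable def mval (D i : ℕ) : ℝ :=
  Real.Gamma ((i:ℝ)+1/2) * Real.Gamma ((D:ℝ)/2) /
    (Real.sqrt Real.pi * Real.Gamma ((D:ℝ)/2 + i))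

lemma hpD {D : ℕ} (hD : 2 ≤ D) : (-1:ℝ) < ((D:ℝ)-3)/2 := by
  have : (2:ℝ) ≤ (D:ℝ) := by exact_mod_cast hD
  linarith

lemma marginal_moment_even (D : ℕ) (hD : 2 ≤ D) (i : ℕ) :
    ∫ t, t^(2*i) ∂ sphereMarginal D = mval D i := by
  have hD2 : (2:ℝ) ≤ (D:ℝ) := by exact_mod_cast hD
  rw [int_marginal D hD]
  have : ∀ x : ℝ, ((1 - x^2) ^ (((D:ℝ)-3)/2) * cD D) * x^(2*i)
      = cD D * (x^(2*i) * (1 - x^2) ^ (((D:ℝ)-3)/2)) := fun x => by ring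
  simp_rw [this]
  rw [integral_const_mul, momEven (hpD hD) i]
  rw [show ((D:ℝ)-3)/2 + 1 = ((D:ℝ)-1)/2 by ring,
    show ((i:ℝ)+1/2) + ((D:ℝ)-1)/2 = (D:ℝ)/2 + i by ring]
  have h2 : 0 < Real.Gamma (((D:ℝ)-1)/2) := Real.Gamma_pos_of_pos (by linarith)
  have h1 : 0 < Real.Gamma ((D:ℝ)/2 + i) := Real.Gamma_pos_of_pos (by positivity)
  have h3 : 0 < Real.sqrt Real.pi := Real.sqrt_pos.2 Real.pi_pos
  show cD D * _ = mval D i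
  unfold cD mval
  field_simp

lemma marginal_moment_odd (D : ℕ) (hD : 2 ≤ D) (i : ℕ) :
    ∫ t, t^(2*i+1) ∂ sphereMarginal D = 0 := by
  rw [int_marginal D hD]
  have : ∀ x : ℝ, ((1 - x^2) ^ (((D:ℝ)-3)/2) * cD D) * x^(2*i+1)
      = cD D * (x^(2*i+1) * (1 - x^2) ^ (((D:ℝ)-3)/2)) := fun x => by ring
  simp_rw [this]
  rw [integral_const_mul, momOdd (hpD hD) i, mul_zero]

lemma Gamma_prod (x : ℝ) (hx : 0 < x) (i : ℕ) :
    Real.Gamma (x + i) = Real.Gamma x * ∏ l ∈ Finset.range i, (x + l) := by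
  induction i with
  | zero => simp
  | succ n ih =>
    have : x + (n+1 : ℕ) = (x + n) + 1 := by push_cast; ring
    rw [this, Real.Gamma_add_one (by positivity), ih, Finset.prod_range_succ]
    push_cast
    ring

lemma mval_eq (D i : ℕ) (hD : 2 ≤ D) :
    mval D i = (Real.Gamma ((i:ℝ)+1/2) / Real.sqrt Real.pi) /
      ∏ l ∈ Finset.range i, ((D:ℝ)/2 + l) := by
  have hD2 : (2:ℝ) ≤ (D:ℝ) := by exact_mod_cast hD
  have hGD : 0 < Real.Gamma ((D:ℝ)/2) := Real.Gamma_pos_of_pos (by linarith)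
  have h3 : 0 < Real.sqrt Real.pi := Real.sqrt_pos.2 Real.pi_pos
  have hPpos : 0 < ∏ l ∈ Finset.range i, ((D:ℝ)/2 + l) :=
    Finset.prod_pos fun l _ => by positivity
  unfold mval
  rw [Gamma_prod _ (by linarith) i]
  field_simp

lemma mval_le (D i : ℕ) (hD : 2 ≤ D) :
    mval D i ≤ (Real.Gamma ((i:ℝ)+1/2) / Real.sqrt Real.pi) * (2/(D:ℝ))^i := by
  have hD2 : (2:ℝ) ≤ (D:ℝ) := by exact_mod_cast hD
  have h3 : 0 < Real.sqrt Real.pi := Real.sqrt_pos.2 Real.pi_pos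
  have hGi : 0 < Real.Gamma ((i:ℝ)+1/2) := Real.Gamma_pos_of_pos (by positivity)
  have hP : ((D:ℝ)/2)^i ≤ ∏ l ∈ Finset.range i, ((D:ℝ)/2 + l) := by
    calc ((D:ℝ)/2)^i = ∏ _l ∈ Finset.range i, ((D:ℝ)/2) := by
          rw [Finset.prod_const, Finset.card_range]
      _ ≤ _ := Finset.prod_le_prod (fun l _ => by positivity)
          (fun l _ => by
            have : (0:ℝ) ≤ (l:ℝ) := by positivity
            linarith)
  rw [mval_eq D i hD,
    show (2/(D:ℝ)) = (((D:ℝ)/2))⁻¹ from by rw [inv_div], inv_pow, ← div_eq_mul_inv]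
  gcongr

lemma mval_ge (D i : ℕ) (hD : 2 ≤ D) :
    (Real.Gamma ((i:ℝ)+1/2) / Real.sqrt Real.pi) * (2/(((i:ℝ)+1)*(D:ℝ)))^i ≤ mval D i := by
  have hD2 : (2:ℝ) ≤ (D:ℝ) := by exact_mod_cast hD
  have h3 : 0 < Real.sqrt Real.pi := Real.sqrt_pos.2 Real.pi_pos
  have hGi : 0 < Real.Gamma ((i:ℝ)+1/2) := Real.Gamma_pos_of_pos (by positivity)
  have hP : ∏ l ∈ Finset.range i, ((D:ℝ)/2 + l) ≤ (((i:ℝ)+1)*((D:ℝ)/2))^i := by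
    calc ∏ l ∈ Finset.range i, ((D:ℝ)/2 + l)
        ≤ ∏ _l ∈ Finset.range i, (((i:ℝ)+1)*((D:ℝ)/2)) :=
          Finset.prod_le_prod (fun l _ => by positivity)
          (fun l hl => by
            have hl' : (l:ℝ) ≤ (i:ℝ) := by
              exact_mod_cast (Finset.mem_range.1 hl).le
            nlinarith)
      _ = (((i:ℝ)+1)*((D:ℝ)/2))^i := by
          rw [Finset.prod_const, Finset.card_range]
  have hPpos : 0 < ∏ l ∈ Finset.range i, ((D:ℝ)/2 + l) :=
    Finset.prod_pos fun l _ => by positivity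
  rw [mval_eq D i hD,
    show (2/(((i:ℝ)+1)*(D:ℝ))) = ((((i:ℝ)+1)*((D:ℝ)/2)))⁻¹ from by
      rw [← inv_div]
      congr 1
      ring, inv_pow, ← div_eq_mul_inv]
  gcongr

lemma expand (D : ℕ) (hD : 2 ≤ D) (k : ℕ) (a r : ℝ) :
    ∫ t, (a + r * t)^k ∂ sphereMarginal D
      = ∑ j ∈ Finset.range (k+1),
          ((k.choose j : ℝ) * a^(k-j) * r^j) * ∫ t, t^j ∂ sphereMarginal D := by
  have hsum : ∀ j, (∫ t, t^j ∂ sphereMarginal D)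
      = ∫ x in Ioo (-1:ℝ) 1, cD D * (x^j * (1 - x^2) ^ (((D:ℝ)-3)/2)) := by
    intro j
    rw [int_marginal D hD (fun t => t^j)]
    exact setIntegral_congr_fun measurableSet_Ioo fun x _ => by ring
  rw [int_marginal D hD (fun t => (a + r*t)^k)]
  have hpt : ∀ x : ℝ, ((1 - x^2) ^ (((D:ℝ)-3)/2) * cD D) * (a + r*x)^k
      = ∑ j ∈ Finset.range (k+1), ((k.choose j : ℝ) * a^(k-j) * r^j) *
          (cD D * (x^j * (1 - x^2) ^ (((D:ℝ)-3)/2))) := by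
    intro x
    rw [add_comm a (r*x), add_pow, Finset.mul_sum]
    refine Finset.sum_congr rfl fun j _ => ?_
    rw [mul_pow]
    ring
  simp_rw [hpt]
  rw [integral_finset_sum _ (fun j _ =>
    (((momInt (hpD hD) j).const_mul (cD D)).const_mul _))]
  refine Finset.sum_congr rfl fun j _ => ?_
  rw [integral_const_mul, hsum j]

lemma mval_pos (D i : ℕ) (hD : 2 ≤ D) : 0 < mval D i := by
  rw [mval_eq D i hD]
  have hGi : 0 < Real.Gamma ((i:ℝ)+1/2) := Real.Gamma_pos_of_pos (by positivity)
  have h3 : 0 < Real.sqrt Real.pi := Real.sqrt_pos.2 Real.pi_pos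
  have hPpos : 0 < ∏ l ∈ Finset.range i, ((D:ℝ)/2 + l) :=
    Finset.prod_pos fun l _ => by positivity
  positivity

lemma mval_zero_eq (D : ℕ) (hD : 2 ≤ D) : mval D 0 = 1 := by
  rw [mval_eq D 0 hD]
  rw [show ((0:ℕ):ℝ) + 1/2 = 1/2 by norm_num, Real.Gamma_one_half_eq]
  simp [div_self (Real.sqrt_pos.2 Real.pi_pos).ne']

lemma mom_cases (D : ℕ) (hD : 2 ≤ D) (j : ℕ) :
    ∫ t, t^j ∂ sphereMarginal D = if Even j then mval D (j/2) else 0 := by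
  rcases Nat.even_or_odd j with he | ho
  · rw [if_pos he]
    obtain ⟨i, hi⟩ := he
    have h2 : j = 2*i := by omega
    subst h2
    rw [marginal_moment_even D hD i]
    congr 1
    omega
  · rw [if_neg (Nat.not_even_iff_odd.mpr ho)]
    obtain ⟨i, hi⟩ := ho
    subst hi
    exact marginal_moment_odd D hD i

/-- Matching bounds for smoothed monomials: for each `k` there are constants `C₀, c(k), C(k)`
such that whenever `λ² ≤ d/C₀` and `α ∈ [0,1]`,
`c(k) s_k(α;λ) ≤ 𝓛_λ(α^k) ≤ C(k) s_k(α;λ)`. -/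
theorem smoothed_monomial_bounds (k : ℕ) :
    ∃ C₀ c C : ℝ, 0 < C₀ ∧ 0 < c ∧ 0 < C ∧
      ∀ (d : ℕ) (lam α : ℝ), 3 ≤ d → 0 ≤ lam → lam ^ 2 ≤ (d : ℝ) / C₀ →
        α ∈ Set.Icc (0 : ℝ) 1 →
        c * sk d k lam α ≤
            (∫ t, ((α + lam * t * Real.sqrt (1 - α ^ 2)) / Real.sqrt (1 + lam ^ 2)) ^ k
              ∂(sphereMarginal (d - 1))) ∧
          (∫ t, ((α + lam * t * Real.sqrt (1 - α ^ 2)) / Real.sqrt (1 + lam ^ 2)) ^ k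
              ∂(sphereMarginal (d - 1))) ≤ C * sk d k lam α := by
  have hsπ : 0 < Real.sqrt Real.pi := Real.sqrt_pos.2 Real.pi_pos
  set K := k / 2 with hKdef
  set cv : ℝ := min 1 ((Real.Gamma ((K:ℝ)+1/2)/Real.sqrt Real.pi) * (1/((K:ℝ)+1))^K) with hcv
  set Cv : ℝ := ∑ j ∈ Finset.range (k+1), ((k.choose j : ℝ) *
      (Real.Gamma (((j/2 : ℕ):ℝ)+1/2)/Real.sqrt Real.pi) * 4^(j/2)) with hCv
  have hGK : 0 < Real.Gamma ((K:ℝ)+1/2) := Real.Gamma_pos_of_pos (by positivity)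
  have hcvpos : 0 < cv := lt_min one_pos (by positivity)
  have hCvpos : 0 < Cv := by
    refine Finset.sum_pos (fun j hj => ?_) ⟨0, by simp⟩
    have hj' : j ≤ k := by
      have := Finset.mem_range.1 hj
      omega
    have h1 : (0:ℝ) < (k.choose j : ℝ) := by
      exact_mod_cast Nat.choose_pos hj'
    have h2 : 0 < Real.Gamma (((j/2 : ℕ):ℝ)+1/2) := Real.Gamma_pos_of_pos (by positivity)
    positivity
  refine ⟨2, cv, Cv, two_pos, hcvpos, hCvpos, ?_⟩
  intro d lam α hd3 hlam hlam2 hα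
  obtain ⟨hα0, hα1⟩ := hα
  have hD : 2 ≤ d - 1 := by omega
  have hDc : ((d-1 : ℕ):ℝ) = (d:ℝ) - 1 := by
    rw [Nat.cast_sub (by omega)]
    norm_num
  have hd3' : (3:ℝ) ≤ (d:ℝ) := by exact_mod_cast hd3
  set b := Real.sqrt (1 - α^2) with hbdef
  have hb2 : b^2 = 1 - α^2 := Real.sq_sqrt (by nlinarith)
  have hb0 : 0 ≤ b := Real.sqrt_nonneg _
  have hccpos : (0:ℝ) < Real.sqrt (1+lam^2) := Real.sqrt_pos.2 (by positivity)
  set q := lam^2/(d:ℝ) with hqdef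
  have hq0 : 0 ≤ q := by positivity
  have hqh : q ≤ 1/2 := by
    rw [hqdef, div_le_div_iff₀ (by linarith) (by norm_num)]
    nlinarith [hlam2]
  -- the expansion
  set F : ℕ → ℝ := fun j => ((k.choose j : ℝ) * α^(k-j) * (lam*b)^j) *
      (if Even j then mval (d-1) (j/2) else 0) with hF
  have hI : (∫ t, ((α + lam * t * b) / Real.sqrt (1 + lam^2)) ^ k ∂(sphereMarginal (d-1)))
      = ((Real.sqrt (1+lam^2))^k)⁻¹ * ∑ j ∈ Finset.range (k+1), F j := by
    have h1 : ∀ t : ℝ, ((α + lam * t * b) / Real.sqrt (1 + lam^2)) ^ k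
        = ((Real.sqrt (1+lam^2))^k)⁻¹ * (α + (lam*b) * t)^k := by
      intro t
      rw [show α + lam * t * b = α + (lam*b)*t by ring, div_pow, div_eq_mul_inv, mul_comm]
    simp_rw [h1]
    rw [integral_const_mul, expand (d-1) hD k α (lam*b)]
    congr 1
    refine Finset.sum_congr rfl fun j _ => ?_
    rw [mom_cases (d-1) hD j]
  -- prefactor
  have hpref : (1 + lam^2) ^ (-(k : ℝ) / 2) = ((Real.sqrt (1+lam^2))^k)⁻¹ := by
    have h2 : (Real.sqrt (1+lam^2))^k = (1+lam^2)^((k:ℝ)/2) := by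
      rw [Real.sqrt_eq_rpow, ← Real.rpow_natCast ((1+lam^2)^((1:ℝ)/2)) k,
        ← Real.rpow_mul (by positivity)]
      congr 1
      ring
    rw [h2, ← Real.rpow_neg (by positivity)]
    congr 1
    ring
  set S : ℝ := (if q ≤ α^2 then α^k else if Even k then q^((k:ℝ)/2)
      else α * q^(((k:ℝ)-1)/2)) with hS
  have hsk : sk d k lam α = ((Real.sqrt (1+lam^2))^k)⁻¹ * S := by
    rw [sk, hpref]
  have hS0 : 0 ≤ S := by
    rw [hS]
    split_ifs
    · exact pow_nonneg hα0 k
    · exact Real.rpow_nonneg hq0 _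
    · exact mul_nonneg hα0 (Real.rpow_nonneg hq0 _)
  -- rpow conversions
  have hqK_even : Even k → q^((k:ℝ)/2) = q^K := by
    rintro ⟨m, hm⟩
    have hKm : K = m := by omega
    rw [show (k:ℝ)/2 = ((K:ℕ):ℝ) from by
      rw [hKm, show k = 2*m from by omega]
      push_cast
      ring, Real.rpow_natCast]
  have hqK_odd : Odd k → q^(((k:ℝ)-1)/2) = q^K := by
    rintro ⟨m, hm⟩
    have hKm : K = m := by omega
    rw [show ((k:ℝ)-1)/2 = ((K:ℕ):ℝ) from by
      rw [hKm, show k = 2*m+1 from by omega]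
      push_cast
      ring, Real.rpow_natCast]
  have hTnn : ∀ j ∈ Finset.range (k+1), 0 ≤ F j := by
    intro j _
    rw [hF]
    refine mul_nonneg (mul_nonneg (mul_nonneg (Nat.cast_nonneg _) (pow_nonneg hα0 _))
      (pow_nonneg (mul_nonneg hlam hb0) _)) ?_
    split_ifs
    · exact (mval_pos _ _ hD).le
    · exact le_refl 0
  -- upper bound on the sum
  have hup : (∑ j ∈ Finset.range (k+1), F j) ≤ Cv * S := by
    rw [hCv, Finset.sum_mul]
    refine Finset.sum_le_sum fun j hj => ?_
    have hjk : j ≤ k := by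
      have := Finset.mem_range.1 hj
      omega
    rcases Nat.even_or_odd j with hje | hjo
    · obtain ⟨i, hi⟩ := hje
      have hj2 : j = 2*i := by omega
      subst hj2
      have hdiv : (2*i)/2 = i := by omega
      have hGi : 0 < Real.Gamma ((i:ℝ)+1/2) := Real.Gamma_pos_of_pos (by positivity)
      rw [hF]
      simp only [if_pos (even_two_mul i), hdiv]
      have hA : (lam*b)^(2*i) = (lam^2*(1-α^2))^i := by
        rw [pow_mul, mul_pow, hb2]
      have hA2 : (lam^2*(1-α^2))^i ≤ (lam^2)^i := by
        refine pow_le_pow_left₀ (by nlinarith) (by nlinarith) i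
      have hm1 : mval (d-1) i ≤ (Real.Gamma ((i:ℝ)+1/2)/Real.sqrt Real.pi) * (4/(d:ℝ))^i := by
        refine (mval_le (d-1) i hD).trans ?_
        refine mul_le_mul_of_nonneg_left (pow_le_pow_left₀ (by positivity) ?_ i)
          (by positivity)
        rw [hDc, div_le_div_iff₀ (by linarith) (by linarith)]
        nlinarith
      have hAQ : α^(k-2*i) * q^i ≤ S := by
        rw [hS]
        split_ifs with hc1 hc2
        · calc α^(k-2*i) * q^i ≤ α^(k-2*i) * (α^2)^i := by
                refine mul_le_mul_of_nonneg_left (pow_le_pow_left₀ hq0 hc1 i)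
                  (pow_nonneg hα0 _)
            _ = α^k := by
                rw [← pow_mul, ← pow_add]
                congr 1
                omega
        · obtain ⟨m, hm⟩ := hc2
          have hKm : K = m := by omega
          have hik : i ≤ K := by omega
          rw [hqK_even ⟨m, hm⟩]
          calc α^(k-2*i) * q^i ≤ (q)^(K-i) * q^i := by
                refine mul_le_mul_of_nonneg_right ?_ (pow_nonneg hq0 _)
                calc α^(k-2*i) = (α^2)^(K-i) := by
                      rw [← pow_mul]
                      congr 1
                      omega
                  _ ≤ q^(K-i) := pow_le_pow_left₀ (by positivity) (le_of_not_ge hc1) _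
            _ = q^K := by
                rw [← pow_add]
                congr 1
                omega
        · have hko : Odd k := Nat.not_even_iff_odd.mp (by assumption)
          obtain ⟨m, hm⟩ := hko
          have hKm : K = m := by omega
          have hik : i ≤ K := by omega
          rw [hqK_odd ⟨m, hm⟩]
          calc α^(k-2*i) * q^i = α * ((α^2)^(K-i)) * q^i := by
                rw [show k-2*i = 2*(K-i)+1 from by omega, pow_succ, pow_mul]
                ring
            _ ≤ α * q^(K-i) * q^i := by
                refine mul_le_mul_of_nonneg_right (mul_le_mul_of_nonneg_left ?_ hα0)
                  (pow_nonneg hq0 _)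
                exact pow_le_pow_left₀ (by positivity) (le_of_not_ge hc1) _
            _ = α * q^K := by
                rw [mul_assoc, ← pow_add]
                congr 2
                omega
      calc ((k.choose (2*i) : ℝ) * α^(k-2*i) * (lam*b)^(2*i)) * mval (d-1) i
          = ((k.choose (2*i) : ℝ) * α^(k-2*i)) * ((lam^2*(1-α^2))^i * mval (d-1) i) := by
            rw [hA]
            ring
        _ ≤ ((k.choose (2*i) : ℝ) * α^(k-2*i)) *
              ((lam^2)^i * ((Real.Gamma ((i:ℝ)+1/2)/Real.sqrt Real.pi) * (4/(d:ℝ))^i)) := by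
            refine mul_le_mul_of_nonneg_left ?_
              (mul_nonneg (Nat.cast_nonneg _) (pow_nonneg hα0 _))
            exact mul_le_mul hA2 hm1 (mval_pos _ _ hD).le (by positivity)
        _ = ((k.choose (2*i) : ℝ) * (Real.Gamma ((i:ℝ)+1/2)/Real.sqrt Real.pi) * 4^i) *
              (α^(k-2*i) * q^i) := by
            rw [hqdef]
            field_simp
            ring
        _ ≤ ((k.choose (2*i) : ℝ) * (Real.Gamma ((i:ℝ)+1/2)/Real.sqrt Real.pi) * 4^i) * S := by
            refine mul_le_mul_of_nonneg_left hAQ ?_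
            positivity
    · rw [hF]
      simp only [if_neg (Nat.not_even_iff_odd.mpr hjo), mul_zero]
      have h2 : 0 < Real.Gamma (((j/2 : ℕ):ℝ)+1/2) := Real.Gamma_pos_of_pos (by positivity)
      have h1 : (0:ℝ) ≤ (k.choose j : ℝ) := Nat.cast_nonneg _
      positivity
  have hlow : cv * S ≤ ∑ j ∈ Finset.range (k+1), F j := by
    by_cases hc1 : q ≤ α^2
    · have hT0 : F 0 = α^k := by
        rw [hF]
        simp [mval_zero_eq _ hD]
      calc cv * S ≤ 1 * S := mul_le_mul_of_nonneg_right (min_le_left _ _) hS0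
        _ = α^k := by rw [one_mul, hS, if_pos hc1]
        _ = F 0 := hT0.symm
        _ ≤ _ := Finset.single_le_sum hTnn (Finset.mem_range.2 (by omega))
    · have hqα : α^2 < q := not_le.1 hc1
      have h2K : 2*K ≤ k := by omega
      have hF2K : F (2*K) = ((k.choose (2*K):ℝ) * α^(k-2*K) * (lam*b)^(2*K)) * mval (d-1) K := by
        rw [hF]
        simp only [if_pos (even_two_mul K), show (2*K)/2 = K from by omega]
      have hchoose1 : (1:ℝ) ≤ (k.choose (2*K):ℝ) := by
        exact_mod_cast Nat.one_le_iff_ne_zero.mpr (Nat.choose_pos h2K).ne'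
      have hlamb2 : (lam^2/2)^K ≤ (lam*b)^(2*K) := by
        rw [pow_mul, mul_pow, hb2]
        exact pow_le_pow_left₀ (by positivity) (by nlinarith) K
      have hmK : (Real.Gamma ((K:ℝ)+1/2)/Real.sqrt Real.pi) * (2/(((K:ℝ)+1)*(d:ℝ)))^K
          ≤ mval (d-1) K := by
        refine le_trans ?_ (mval_ge (d-1) K hD)
        refine mul_le_mul_of_nonneg_left (pow_le_pow_left₀ (by positivity) ?_ K)
          (div_nonneg hGK.le hsπ.le)
        rw [hDc, div_le_div_iff₀ (by positivity) (by nlinarith [Nat.cast_nonneg (α := ℝ) K])]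
        nlinarith [Nat.cast_nonneg (α := ℝ) K]
      have hBnn : (0:ℝ) ≤ (Real.Gamma ((K:ℝ)+1/2)/Real.sqrt Real.pi) *
          (2/(((K:ℝ)+1)*(d:ℝ)))^K :=
        mul_nonneg (div_nonneg hGK.le hsπ.le) (pow_nonneg (by positivity) K)
      have hiden : (lam^2/2)^K * ((Real.Gamma ((K:ℝ)+1/2)/Real.sqrt Real.pi) *
            (2/(((K:ℝ)+1)*(d:ℝ)))^K)
          = (Real.Gamma ((K:ℝ)+1/2)/Real.sqrt Real.pi) * (1/((K:ℝ)+1))^K * q^K := by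
        have hd0 : (d:ℝ) ≠ 0 := by linarith
        have hK0 : ((K:ℝ)+1) ≠ 0 := by positivity
        have h1 : (lam^2/2) * (2/(((K:ℝ)+1)*(d:ℝ))) = (1/((K:ℝ)+1)) * (lam^2/(d:ℝ)) := by
          field_simp
        rw [hqdef]
        calc (lam^2/2)^K * ((Real.Gamma ((K:ℝ)+1/2)/Real.sqrt Real.pi) *
              (2/(((K:ℝ)+1)*(d:ℝ)))^K)
            = (Real.Gamma ((K:ℝ)+1/2)/Real.sqrt Real.pi) *
              ((lam^2/2) * (2/(((K:ℝ)+1)*(d:ℝ))))^K := by rw [mul_pow]; ring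
          _ = (Real.Gamma ((K:ℝ)+1/2)/Real.sqrt Real.pi) *
              ((1/((K:ℝ)+1)) * (lam^2/(d:ℝ)))^K := by rw [h1]
          _ = (Real.Gamma ((K:ℝ)+1/2)/Real.sqrt Real.pi) * (1/((K:ℝ)+1))^K
              * (lam^2/(d:ℝ))^K := by rw [mul_pow]; ring
      have hstep : (Real.Gamma ((K:ℝ)+1/2)/Real.sqrt Real.pi) * (1/((K:ℝ)+1))^K * q^K
          ≤ ((k.choose (2*K):ℝ)) * ((lam*b)^(2*K) * mval (d-1) K) := by
        rw [← hiden]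
        calc (lam^2/2)^K * ((Real.Gamma ((K:ℝ)+1/2)/Real.sqrt Real.pi) *
              (2/(((K:ℝ)+1)*(d:ℝ)))^K)
            ≤ 1 * ((lam*b)^(2*K) * mval (d-1) K) := by
              rw [one_mul]
              exact mul_le_mul hlamb2 hmK hBnn (pow_nonneg (mul_nonneg hlam hb0) _)
          _ ≤ _ := mul_le_mul_of_nonneg_right hchoose1
              (mul_nonneg (pow_nonneg (mul_nonneg hlam hb0) _) (mval_pos _ _ hD).le)
      have hfin : F (2*K) ≤ ∑ j ∈ Finset.range (k+1), F j :=
        Finset.single_le_sum hTnn (Finset.mem_range.2 (by omega))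
      rcases Nat.even_or_odd k with hke | hko
      · have hSval : S = q^K := by rw [hS, if_neg hc1, if_pos hke, hqK_even hke]
        have hk2K : k - 2*K = 0 := by
          obtain ⟨m, hm⟩ := hke
          omega
        calc cv * S ≤ ((Real.Gamma ((K:ℝ)+1/2)/Real.sqrt Real.pi) * (1/((K:ℝ)+1))^K) * S :=
              mul_le_mul_of_nonneg_right (min_le_right _ _) hS0
          _ = (Real.Gamma ((K:ℝ)+1/2)/Real.sqrt Real.pi) * (1/((K:ℝ)+1))^K * q^K := by
              rw [hSval]
          _ ≤ ((k.choose (2*K):ℝ)) * ((lam*b)^(2*K) * mval (d-1) K) := hstep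
          _ = F (2*K) := by rw [hF2K, hk2K, pow_zero]; ring
          _ ≤ _ := hfin
      · have hSval : S = α * q^K := by rw [hS, if_neg hc1,
          if_neg (Nat.not_even_iff_odd.mpr hko), hqK_odd hko]
        have hk2K : k - 2*K = 1 := by
          obtain ⟨m, hm⟩ := hko
          omega
        calc cv * S ≤ ((Real.Gamma ((K:ℝ)+1/2)/Real.sqrt Real.pi) * (1/((K:ℝ)+1))^K) * S :=
              mul_le_mul_of_nonneg_right (min_le_right _ _) hS0
          _ = α * ((Real.Gamma ((K:ℝ)+1/2)/Real.sqrt Real.pi) * (1/((K:ℝ)+1))^K * q^K) := by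
              rw [hSval]
              ring
          _ ≤ α * (((k.choose (2*K):ℝ)) * ((lam*b)^(2*K) * mval (d-1) K)) :=
              mul_le_mul_of_nonneg_left hstep hα0
          _ = F (2*K) := by rw [hF2K, hk2K, pow_one]; ring
          _ ≤ _ := hfin
  have hinv : (0:ℝ) ≤ ((Real.sqrt (1+lam^2))^k)⁻¹ :=
    inv_nonneg.2 (pow_nonneg hccpos.le k)
  constructor
  · rw [hsk, hI, show cv * (((Real.sqrt (1+lam^2))^k)⁻¹ * S)
      = ((Real.sqrt (1+lam^2))^k)⁻¹ * (cv * S) from by ring]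
    exact mul_le_mul_of_nonneg_left hlow hinv
  · rw [hsk, hI, show Cv * (((Real.sqrt (1+lam^2))^k)⁻¹ * S)
      = ((Real.sqrt (1+lam^2))^k)⁻¹ * (Cv * S) from by ring]
    exact mul_le_mul_of_nonneg_left hup hinv
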